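/- arXiv:2006.16325 — 3 statements merged into one kernel-verified Lean document; each statement's English description precedes it below -/
import Mathlib

section
/- Let t₀ ≥ 0, δ > 0, σ > 0 and b < 0. Let T₁ ∈ (t₀, ∞] and let J : [t₀, T₁) → (0, ∞) be a nonincreasing differentiable function satisfying J'(t)² ≥ σ + b·J(t)^{2 + 1/δ} for all t ∈ [t₀, T₁), where [t₀, T₁) is the maximal interval of positivity of J (that is, either T₁ = ∞, or T₁ < ∞ and lim_{t→T₁⁻} J(t) = 0). If J(t₀) < min{1, √(σ/(−b))}, then T₁ is finite, lim_{t→T₁⁻} J(t) = 0, and writing T* = T₁ one has the upper bound T* ≤ t₀ + (1/√(−b))·ln( √(σ/(−b)) / ( √(σ/(−b)) − J(t₀) ) ). -/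
/-!
Since `J` decreases from `J t₀ < min 1 K`, where `K = √(σ / -b)`, the exponent `2 + 1/δ ≥ 2` gives
`J'² ≥ σ + b J² = (-b)(K² - J²) ≥ (-b)(K - J)²`, and as `J' ≤ 0` this reads
`(K - J)' ≥ √(-b) (K - J)`. Hence `K - J` grows at least like `(K - J t₀) e^{√(-b)(t - t₀)}`,
while it stays below `K` as long as `J > 0`. This caps the length of the interval of positivity,
so `T₁` is finite and the maximality hypothesis supplies the limit `J → 0`.
-/

open Filter Real Set

lemma mul_exp_le_of_hasDerivAt_ge_mul {g g' : ℝ → ℝ} {β a b : ℝ} (hab : a ≤ b)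
    (hcont : ContinuousOn g (Icc a b)) (hderiv : ∀ t ∈ Ioo a b, HasDerivAt g (g' t) t)
    (hbound : ∀ t ∈ Ioo a b, β * g t ≤ g' t) :
    g a * exp (β * (b - a)) ≤ g b := by
  have hmono : MonotoneOn (fun t => g t * exp (-β * t)) (Icc a b) := by
    refine monotoneOn_of_hasDerivWithinAt_nonneg (convex_Icc a b)
      (hcont.mul (by fun_prop)) (f' := fun t => (g' t - β * g t) * exp (-β * t)) ?_ ?_
    · intro t ht
      rw [interior_Icc] at ht
      have hexp : HasDerivAt (fun t => exp (-β * t)) (exp (-β * t) * -β) t := by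
        simpa using ((hasDerivAt_id t).const_mul (-β)).exp
      exact (((hderiv t ht).mul hexp).congr_deriv (by ring)).hasDerivWithinAt
    · intro t ht
      rw [interior_Icc] at ht
      exact mul_nonneg (sub_nonneg.2 (hbound t ht)) (exp_pos _).le
  have h := hmono (left_mem_Icc.2 hab) (right_mem_Icc.2 hab) hab
  calc g a * exp (β * (b - a)) = g a * exp (-β * a) * exp (β * b) := by
        rw [mul_assoc, ← exp_add]; congr 2; ring
    _ ≤ g b * exp (-β * b) * exp (β * b) := by gcongr
    _ = g b := by rw [mul_assoc, ← exp_add, neg_mul, neg_add_cancel, exp_zero, mul_one]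

lemma neg_mul_sq_sub_le_add_mul_rpow {σ b x p : ℝ} (hσ : 0 ≤ σ) (hb : b < 0) (hx₀ : 0 ≤ x)
    (hx₁ : x ≤ 1) (hxK : x ≤ √(σ / -b)) (hp : 2 ≤ p) :
    -b * (√(σ / -b) - x) ^ 2 ≤ σ + b * x ^ p := by
  have hσK : σ = -b * √(σ / -b) ^ 2 := by
    rw [sq_sqrt (div_nonneg hσ (neg_nonneg.2 hb.le)), mul_div_cancel₀ _ (neg_ne_zero.2 hb.ne)]
  have hpow : x ^ p ≤ x ^ 2 := by
    simpa using rpow_le_rpow_of_exponent_ge' hx₀ hx₁ zero_le_two hp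
  nlinarith [mul_le_mul_of_nonpos_left hpow hb.le, mul_nonneg hx₀ (sub_nonneg.2 hxK)]

lemma le_add_log_of_sq_deriv_ge {J J' : ℝ → ℝ} {t₀ s σ b p : ℝ} (hs : t₀ ≤ s) (hσ : 0 ≤ σ)
    (hb : b < 0) (hp : 2 ≤ p) (hnonneg : ∀ t ∈ Icc t₀ s, 0 ≤ J t)
    (hanti : AntitoneOn J (Icc t₀ s)) (hderiv : ∀ t ∈ Icc t₀ s, HasDerivAt J (J' t) t)
    (hineq : ∀ t ∈ Icc t₀ s, σ + b * J t ^ p ≤ J' t ^ 2)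
    (hsmall : J t₀ < min 1 √(σ / -b)) :
    s ≤ t₀ + 1 / √(-b) * log (√(σ / -b) / (√(σ / -b) - J t₀)) := by
  set K := √(σ / -b)
  obtain ⟨hJ₀1, hJ₀K⟩ := lt_min_iff.1 hsmall
  have hβ : 0 < √(-b) := sqrt_pos.2 (neg_pos.2 hb)
  have hJ'_nonpos : ∀ t ∈ Ioo t₀ s, J' t ≤ 0 := fun t ht =>
    have htI : t ∈ Icc t₀ s := Ioo_subset_Icc_self ht
    (hderiv t htI).hasDerivWithinAt.nonpos_of_antitoneOn
      ((uniqueDiffOn_Icc (ht.1.trans ht.2) t htI).accPt) hanti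
  have hdecay : ∀ t ∈ Ioo t₀ s, √(-b) * (K - J t) ≤ -J' t := by
    intro t ht
    have htI : t ∈ Icc t₀ s := Ioo_subset_Icc_self ht
    have hJt : J t ≤ J t₀ := hanti (left_mem_Icc.2 hs) htI htI.1
    have hsq : -b * (K - J t) ^ 2 ≤ J' t ^ 2 :=
      (neg_mul_sq_sub_le_add_mul_rpow hσ hb (hnonneg t htI)
        (hJt.trans hJ₀1.le) (hJt.trans hJ₀K.le) hp).trans (hineq t htI)
    refine le_of_sq_le_sq ?_ (neg_nonneg.2 (hJ'_nonpos t ht))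
    rwa [mul_pow, sq_sqrt (neg_nonneg.2 hb.le), neg_sq]
  have hgrowth : (K - J t₀) * exp (√(-b) * (s - t₀)) ≤ K - J s :=
    mul_exp_le_of_hasDerivAt_ge_mul hs
      (fun t ht => ((hderiv t ht).const_sub K).continuousAt.continuousWithinAt)
      (fun t ht => (hderiv t (Ioo_subset_Icc_self ht)).const_sub K) hdecay
  have hexp : √(-b) * (s - t₀) ≤ log (K / (K - J t₀)) := by
    rw [le_log_iff_exp_le (div_pos (hnonneg t₀ (left_mem_Icc.2 hs) |>.trans_lt hJ₀K)
      (sub_pos.2 hJ₀K)), le_div_iff₀ (sub_pos.2 hJ₀K)]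
    linarith [hnonneg s (right_mem_Icc.2 hs)]
  rw [← sub_le_iff_le_add', one_div_mul_eq_div, le_div_iff₀ hβ]
  linarith

theorem stmt_1_general (t₀ δ σ b : ℝ) (hδ : 0 < δ) (hσ : 0 < σ) (hb : b < 0)
    (T₁ : EReal) (hT₁ : (t₀ : EReal) < T₁)
    (J J' : ℝ → ℝ)
    (hpos : ∀ t : ℝ, t₀ ≤ t → (t : EReal) < T₁ → 0 < J t)
    (hmono : ∀ s t : ℝ, t₀ ≤ s → s ≤ t → (t : EReal) < T₁ → J t ≤ J s)
    (hderiv : ∀ t : ℝ, t₀ ≤ t → (t : EReal) < T₁ → HasDerivAt J (J' t) t)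
    (hineq : ∀ t : ℝ, t₀ ≤ t → (t : EReal) < T₁ →
      (J' t) ^ 2 ≥ σ + b * (J t) ^ (2 + 1 / δ : ℝ))
    (hmax : T₁ = ⊤ ∨ ∃ T : ℝ, T₁ = (T : EReal) ∧
      Tendsto J (nhdsWithin T (Set.Iio T)) (nhds 0))
    (hsmall : J t₀ < min 1 (Real.sqrt (σ / (-b)))) :
    ∃ T : ℝ, T₁ = (T : EReal) ∧
      Tendsto J (nhdsWithin T (Set.Iio T)) (nhds 0) ∧
      T ≤ t₀ + (1 / Real.sqrt (-b)) *
        Real.log (Real.sqrt (σ / (-b)) / (Real.sqrt (σ / (-b)) - J t₀)) := by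
  set B := t₀ + (1 / √(-b)) * log (√(σ / -b) / (√(σ / -b) - J t₀))
  have hbound : ∀ s : ℝ, t₀ ≤ s → (s : EReal) < T₁ → s ≤ B := by
    intro s hs hsT
    have hlt : ∀ t ∈ Icc t₀ s, (t : EReal) < T₁ := fun t ht =>
      (EReal.coe_le_coe_iff.2 ht.2).trans_lt hsT
    exact le_add_log_of_sq_deriv_ge hs hσ.le hb (by have := one_div_pos.2 hδ; linarith)
      (fun t ht => (hpos t ht.1 (hlt t ht)).le)
      (fun x hx y hy hxy => hmono x y hx.1 hxy (hlt y hy))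
      (fun t ht => hderiv t ht.1 (hlt t ht)) (fun t ht => hineq t ht.1 (hlt t ht)) hsmall
  rcases hmax with rfl | ⟨T, rfl, hlim⟩
  · have := hbound (max t₀ (B + 1)) (le_max_left _ _) (EReal.coe_lt_top _)
    linarith [le_max_right t₀ (B + 1)]
  · refine ⟨T, rfl, hlim, le_of_forall_lt_imp_le_of_dense fun a ha => ?_⟩
    have hmaxT : max a t₀ < T := max_lt ha (EReal.coe_lt_coe_iff.1 hT₁)
    exact (le_max_left a t₀).trans
      (hbound _ (le_max_right a t₀) (EReal.coe_lt_coe_iff.2 hmaxT))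

/-- Lemma 4(i) of the paper: if `J : [t₀, T₁) → (0,∞)` is nonincreasing, differentiable,
satisfies `J'(t)² ≥ σ + b J(t)^{2+1/δ}` with `σ > 0`, `b < 0`, `[t₀,T₁)` is the maximal
interval of positivity of `J`, and `J(t₀) < min{1, √(σ/(-b))}`, then `T₁ = T* < ∞`,
`J(t) → 0` as `t → T*⁻`, and
`T* ≤ t₀ + (1/√(-b)) log( √(σ/(-b)) / (√(σ/(-b)) - J(t₀)) )`. -/
theorem stmt_1 (t₀ δ σ b : ℝ) (ht₀ : 0 ≤ t₀) (hδ : 0 < δ) (hσ : 0 < σ) (hb : b < 0)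
    (T₁ : EReal) (hT₁ : (t₀ : EReal) < T₁)
    (J J' : ℝ → ℝ)
    (hpos : ∀ t : ℝ, t₀ ≤ t → (t : EReal) < T₁ → 0 < J t)
    (hmono : ∀ s t : ℝ, t₀ ≤ s → s ≤ t → (t : EReal) < T₁ → J t ≤ J s)
    (hderiv : ∀ t : ℝ, t₀ ≤ t → (t : EReal) < T₁ → HasDerivAt J (J' t) t)
    (hineq : ∀ t : ℝ, t₀ ≤ t → (t : EReal) < T₁ →
      (J' t) ^ 2 ≥ σ + b * (J t) ^ (2 + 1 / δ : ℝ))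
    (hmax : T₁ = ⊤ ∨ ∃ T : ℝ, T₁ = (T : EReal) ∧
      Tendsto J (nhdsWithin T (Set.Iio T)) (nhds 0))
    (hsmall : J t₀ < min 1 (Real.sqrt (σ / (-b)))) :
    ∃ T : ℝ, T₁ = (T : EReal) ∧
      Tendsto J (nhdsWithin T (Set.Iio T)) (nhds 0) ∧
      T ≤ t₀ + (1 / Real.sqrt (-b)) *
        Real.log (Real.sqrt (σ / (-b)) / (Real.sqrt (σ / (-b)) - J t₀)) :=
  stmt_1_general t₀ δ σ b hδ hσ hb T₁ hT₁ J J' hpos hmono hderiv hineq hmax hsmall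
end

section
/- Let 0 < α < 1, η ≥ 0, let v : [0, ∞) → ℝ be continuous, and set φ(ξ, t) = ∫₀ᵗ μ(ξ) e^{−(ξ²+η)(t−s)} v(s) ds for ξ ∈ ℝ, t ≥ 0, and ϱ = sin(απ)/π. Then for every t > 0 the output O(t) = ϱ ∫_{−∞}^{+∞} φ(ξ, t) μ(ξ) dξ is well defined (the integral converges absolutely) and satisfies O(t) = I^{1−α,η} v (t) = (1/Γ(1−α)) ∫₀ᵗ (t−s)^{−α} e^{−η(t−s)} v(s) ds. -/
/-!
Since `μ(ξ)² = |ξ|^{2α-1}`, Fubini turns the output into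
`∫₀ᵗ (∫_ℝ |ξ|^{2α-1} e^{-(t-s)ξ²} dξ) e^{-η(t-s)} v(s) ds`, and the Gaussian moment
`∫_ℝ |ξ|^{2α-1} e^{-uξ²} dξ = Γ(α) u^{-α}` identifies the inner integral. The reflection formula
`Γ(α) Γ(1-α) = π / sin(απ)` then turns `ϱ Γ(α)` into `1/Γ(1-α)`. Absolute convergence comes
from the same computation: the inner integral of the absolute value is `Γ(α) (t-s)^{-α}` times
a bounded factor, and `(t-s)^{-α}` is integrable on `(0,t)` because `α < 1`.
-/

open MeasureTheory Real Set

lemma integrable_abs_rpow_mul_exp_neg_mul_sq {q u : ℝ} (hq : -1 < q) (hu : 0 < u) :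
    Integrable (fun ξ : ℝ => |ξ| ^ q * exp (-u * ξ ^ 2)) := by
  have h_pos : IntegrableOn (fun ξ : ℝ => |ξ| ^ q * exp (-u * ξ ^ 2)) (Ioi 0) :=
    (integrableOn_rpow_mul_exp_neg_mul_sq hu hq).congr_fun
      (fun x hx => by rw [abs_of_pos (mem_Ioi.mp hx)]) measurableSet_Ioi
  have h_neg : IntegrableOn (fun ξ : ℝ => |ξ| ^ q * exp (-u * ξ ^ 2)) (Iic 0) := by
    have h_emb : MeasurableEmbedding fun x : ℝ => -x := (Homeomorph.neg ℝ).measurableEmbedding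
    rw [← Measure.map_neg_eq_self (volume : Measure ℝ), h_emb.integrableOn_map_iff]
    simp only [Function.comp_def, abs_neg, neg_sq, neg_preimage, neg_Iic, neg_zero]
    exact (integrableOn_Ici_iff_integrableOn_Ioi).mpr h_pos
  rw [← integrableOn_univ, ← Iic_union_Ioi (a := (0 : ℝ)), integrableOn_union]
  exact ⟨h_neg, h_pos⟩

lemma integral_abs_rpow_mul_exp_neg_mul_sq {α u : ℝ} (hα : 0 < α) (hu : 0 < u) :
    ∫ ξ : ℝ, |ξ| ^ (2 * α - 1) * exp (-u * ξ ^ 2) = Gamma α * u ^ (-α) := by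
  have h_half := integral_rpow_mul_exp_neg_mul_rpow (p := 2) (q := 2 * α - 1) (b := u)
    two_pos (by linarith) hu
  simp only [rpow_two, show (2 * α - 1 + 1) / 2 = α by ring,
    show -(2 * α - 1 + 1) / 2 = -α by ring] at h_half
  calc ∫ ξ : ℝ, |ξ| ^ (2 * α - 1) * exp (-u * ξ ^ 2)
      = ∫ ξ : ℝ, (fun x : ℝ => x ^ (2 * α - 1) * exp (-u * x ^ 2)) |ξ| := by simp only [sq_abs]
    _ = 2 * ∫ x in Ioi 0, x ^ (2 * α - 1) * exp (-u * x ^ 2) :=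
      integral_comp_abs (f := fun x : ℝ => x ^ (2 * α - 1) * exp (-u * x ^ 2))
    _ = Gamma α * u ^ (-α) := by rw [h_half]; ring

lemma sin_mul_pi_div_pi_mul_Gamma {α : ℝ} (hα0 : 0 < α) (hα1 : α < 1) :
    sin (α * π) / π * Gamma α = 1 / Gamma (1 - α) := by
  have hsin : sin (α * π) ≠ 0 :=
    (sin_pos_of_pos_of_lt_pi (by positivity) (by nlinarith [pi_pos])).ne'
  have hΓ : Gamma (1 - α) ≠ 0 := (Gamma_pos_of_pos (by linarith)).ne'
  have h := Gamma_mul_Gamma_one_sub α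
  rw [mul_comm π α] at h
  field_simp at h ⊢
  linear_combination h

section DiffusiveRepresentation

variable {α t : ℝ} {w : ℝ → ℝ}

lemma integrableOn_Ioo_sub_rpow_neg (hα : α < 1) :
    IntegrableOn (fun s : ℝ => (t - s) ^ (-α)) (Ioo 0 t) := by
  have h := (intervalIntegral.intervalIntegrable_rpow' (r := -α) (by linarith)).comp_sub_left t
    (a := t) (b := 0)
  simp only [sub_self, sub_zero] at h
  exact h.symm.def'.mono_set (Ioo_subset_Ioc_self.trans Ioc_subset_uIoc')

lemma integrable_abs_rpow_mul_exp_mul_prod (hα0 : 0 < α) (hα1 : α < 1)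
    (hw : ContinuousOn w (Icc 0 t)) :
    Integrable (fun z : ℝ × ℝ => |z.1| ^ (2 * α - 1) * exp (-(t - z.2) * z.1 ^ 2) * w z.2)
      (volume.prod (volume.restrict (Ioo 0 t))) := by
  obtain ⟨M, hM⟩ := isCompact_Icc.exists_bound_of_continuousOn hw
  have hw_meas : AEStronglyMeasurable w (volume.restrict (Ioo 0 t)) :=
    (hw.mono Ioo_subset_Icc_self).aestronglyMeasurable measurableSet_Ioo
  have h_meas : AEStronglyMeasurable
      (fun z : ℝ × ℝ => |z.1| ^ (2 * α - 1) * exp (-(t - z.2) * z.1 ^ 2) * w z.2)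
      (volume.prod (volume.restrict (Ioo 0 t))) :=
    (by fun_prop : Measurable fun z : ℝ × ℝ => |z.1| ^ (2 * α - 1) * exp (-(t - z.2) * z.1 ^ 2))
      |>.aestronglyMeasurable.mul
        (hw_meas.comp_quasiMeasurePreserving Measure.quasiMeasurePreserving_snd)
  rw [integrable_prod_iff' h_meas]
  constructor
  · filter_upwards [ae_restrict_mem measurableSet_Ioo] with s hs
    exact (integrable_abs_rpow_mul_exp_neg_mul_sq (by linarith) (sub_pos.mpr hs.2)).mul_const _
  · have h_inner : (fun s => ∫ ξ, ‖|ξ| ^ (2 * α - 1) * exp (-(t - s) * ξ ^ 2) * w s‖)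
        =ᵐ[volume.restrict (Ioo 0 t)] fun s => Gamma α * (t - s) ^ (-α) * ‖w s‖ := by
      filter_upwards [ae_restrict_mem measurableSet_Ioo] with s hs
      simp only [norm_mul, norm_of_nonneg (rpow_nonneg (abs_nonneg _) _),
        norm_of_nonneg (exp_pos _).le]
      rw [integral_mul_const, integral_abs_rpow_mul_exp_neg_mul_sq hα0 (sub_pos.mpr hs.2)]
    refine Integrable.congr ?_ h_inner.symm
    refine ((integrableOn_Ioo_sub_rpow_neg hα1).const_mul (Gamma α)).mul_bdd (c := M)
      hw_meas.norm ?_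
    filter_upwards [ae_restrict_mem measurableSet_Ioo] with s hs
    simpa using hM s (Ioo_subset_Icc_self hs)

theorem integrable_intervalIntegral_abs_rpow_mul_exp_mul (hα0 : 0 < α) (hα1 : α < 1)
    (ht : 0 ≤ t) (hw : ContinuousOn w (Icc 0 t)) :
    Integrable (fun ξ : ℝ => ∫ s in 0..t, |ξ| ^ (2 * α - 1) * exp (-(t - s) * ξ ^ 2) * w s) ∧
      ∫ ξ : ℝ, ∫ s in 0..t, |ξ| ^ (2 * α - 1) * exp (-(t - s) * ξ ^ 2) * w s =
        Gamma α * ∫ s in 0..t, (t - s) ^ (-α) * w s := by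
  have h_int := integrable_abs_rpow_mul_exp_mul_prod hα0 hα1 hw
  simp only [intervalIntegral.integral_of_le ht, integral_Ioc_eq_integral_Ioo]
  refine ⟨h_int.integral_prod_left, ?_⟩
  rw [integral_integral_swap h_int, ← integral_const_mul]
  refine setIntegral_congr_fun measurableSet_Ioo fun s hs => ?_
  rw [integral_mul_const, integral_abs_rpow_mul_exp_neg_mul_sq hα0 (sub_pos.mpr hs.2)]
  ring

end DiffusiveRepresentation

theorem stmt_9_general (α η : ℝ) (hα0 : 0 < α) (hα1 : α < 1)
    (v : ℝ → ℝ) (hv : ContinuousOn v (Set.Ici (0 : ℝ)))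
    (φ : ℝ → ℝ → ℝ)
    (hφ : ∀ ξ t : ℝ, φ ξ t =
      ∫ s in (0 : ℝ)..t, |ξ| ^ ((2 * α - 1) / 2) * Real.exp (-(ξ ^ 2 + η) * (t - s)) * v s) :
    ∀ t > (0 : ℝ),
      Integrable (fun ξ : ℝ => φ ξ t * |ξ| ^ ((2 * α - 1) / 2)) volume ∧
      (Real.sin (α * Real.pi) / Real.pi) *
          (∫ ξ : ℝ, φ ξ t * |ξ| ^ ((2 * α - 1) / 2)) =
        (1 / Real.Gamma (1 - α)) *
          ∫ s in (0 : ℝ)..t, (t - s) ^ (-α) * Real.exp (-η * (t - s)) * v s := by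
  intro t ht
  have hw : ContinuousOn (fun s => exp (-η * (t - s)) * v s) (Icc 0 t) :=
    (by fun_prop : Continuous fun s => exp (-η * (t - s))).continuousOn.mul
      (hv.mono Icc_subset_Ici_self)
  have h_output : (fun ξ => φ ξ t * |ξ| ^ ((2 * α - 1) / 2)) = fun ξ =>
      ∫ s in 0..t, |ξ| ^ (2 * α - 1) * exp (-(t - s) * ξ ^ 2) * (exp (-η * (t - s)) * v s) := by
    funext ξ
    rw [hφ, ← intervalIntegral.integral_mul_const]
    congr 1
    funext s
    have h_sq : |ξ| ^ (2 * α - 1) = |ξ| ^ ((2 * α - 1) / 2) * |ξ| ^ ((2 * α - 1) / 2) := by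
      rw [← sq, ← rpow_two, ← rpow_mul (abs_nonneg ξ), div_mul_cancel₀ _ two_ne_zero]
    rw [h_sq, show -(ξ ^ 2 + η) * (t - s) = -(t - s) * ξ ^ 2 + -η * (t - s) by ring, exp_add]
    ring
  obtain ⟨h_int, h_eq⟩ := integrable_intervalIntegral_abs_rpow_mul_exp_mul hα0 hα1 ht.le hw
  refine ⟨h_output ▸ h_int, ?_⟩
  rw [h_output, h_eq, ← mul_assoc, sin_mul_pi_div_pi_mul_Gamma hα0 hα1]
  simp only [mul_assoc]

/-- Theorem 1 of the paper (Mbodje's diffusive representation): with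
`μ(ξ) = |ξ|^{(2α-1)/2}`, `ϱ = sin(απ)/π` and
`φ(ξ,t) = ∫₀ᵗ μ(ξ) e^{-(ξ²+η)(t-s)} v(s) ds`, for every `t > 0` the output
`O(t) = ϱ ∫_ℝ φ(ξ,t) μ(ξ) dξ` is well defined and equals
`I^{1-α,η} v(t) = (1/Γ(1-α)) ∫₀ᵗ (t-s)^{-α} e^{-η(t-s)} v(s) ds`. -/
theorem stmt_9 (α η : ℝ) (hα0 : 0 < α) (hα1 : α < 1) (hη : 0 ≤ η)
    (v : ℝ → ℝ) (hv : ContinuousOn v (Set.Ici (0 : ℝ)))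
    (φ : ℝ → ℝ → ℝ)
    (hφ : ∀ ξ t : ℝ, φ ξ t =
      ∫ s in (0 : ℝ)..t, |ξ| ^ ((2 * α - 1) / 2) * Real.exp (-(ξ ^ 2 + η) * (t - s)) * v s) :
    ∀ t > (0 : ℝ),
      Integrable (fun ξ : ℝ => φ ξ t * |ξ| ^ ((2 * α - 1) / 2)) volume ∧
      (Real.sin (α * Real.pi) / Real.pi) *
          (∫ ξ : ℝ, φ ξ t * |ξ| ^ ((2 * α - 1) / 2)) =
        (1 / Real.Gamma (1 - α)) *
          ∫ s in (0 : ℝ)..t, (t - s) ^ (-α) * Real.exp (-η * (t - s)) * v s :=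
  stmt_9_general α η hα0 hα1 v hv φ hφ
end

section
/- Let 0 < α < 1, η ≥ 0, T > 0, and let w : [0, T) → ℝ be continuous with |w(s)| ≤ M for all s ∈ [0, T) and some constant M ≥ 0. Define φ(ξ, t) = ∫₀ᵗ μ(ξ) e^{−(ξ²+η)(t−s)} w(s) ds and H(t) = ∫₀ᵗ ∫_{−∞}^{+∞} (ξ² + η) ( ∫₀^s φ(ξ, z) dz )² dξ ds for t ∈ [0, T). Then there exists a finite constant C (depending only on α, η, M and T) such that H(t) ≤ C < +∞ for all t ∈ [0, T). -/
/-! With `a = ξ² + η`, the kernel `e^{-a(t-s)}` has mass at most `min t a⁻¹` on `[0, t]`, so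
`|φ(ξ, z)| ≤ μ(ξ) M min T a⁻¹` and, for `0 ≤ s < T`,
`a (∫₀ˢ φ(ξ, z) dz)² ≤ M² T² |ξ|^{2α-1} a (min T a⁻¹)² ≤ M² T² |ξ|^{2α-1} min T a⁻¹`.
The last bound behaves like `|ξ|^{2α-1}` near `0` and like `|ξ|^{2α-3}` at infinity, hence is
integrable exactly because `0 < α < 1`; so the inner integral of `H` is bounded uniformly in `s`
and `H(t) ≤ T ∫ (bound) dξ`. -/

open MeasureTheory Set Real

theorem integral_exp_neg_mul_sub {a : ℝ} (ha : a ≠ 0) (z : ℝ) :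
    ∫ x in (0 : ℝ)..z, exp (-a * (z - x)) = a⁻¹ * (1 - exp (-a * z)) := by
  rw [intervalIntegral.integral_comp_sub_left (fun u => exp (-a * u)),
    intervalIntegral.integral_comp_mul_left (fun u => exp u) (neg_ne_zero.mpr ha), integral_exp]
  simp only [sub_self, sub_zero, mul_zero, exp_zero, smul_eq_mul, inv_neg]
  ring

theorem integral_exp_neg_mul_sub_le_min {a z : ℝ} (ha : 0 < a) (hz : 0 ≤ z) :
    ∫ x in (0 : ℝ)..z, exp (-a * (z - x)) ≤ min z a⁻¹ := by
  refine le_min ?_ ?_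
  · calc ∫ x in (0 : ℝ)..z, exp (-a * (z - x)) ≤ ∫ _ in (0 : ℝ)..z, (1 : ℝ) := by
          refine intervalIntegral.integral_mono_on hz
            ((by fun_prop : Continuous _).intervalIntegrable _ _) (by simp) fun x hx => ?_
          exact exp_le_one_iff.mpr (by nlinarith [hx.2])
      _ = z := by simp
  · rw [integral_exp_neg_mul_sub ha.ne']
    exact mul_le_of_le_one_right (inv_nonneg.mpr ha.le) (by linarith [exp_pos (-a * z)])

theorem abs_integral_mul_exp_neg_mul_sub_le {a c M z : ℝ} {w : ℝ → ℝ} (ha : 0 < a) (hc : 0 ≤ c)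
    (hM : 0 ≤ M) (hz : 0 ≤ z) (hw : ∀ x ∈ Ioc 0 z, |w x| ≤ M) :
    |∫ x in (0 : ℝ)..z, c * exp (-a * (z - x)) * w x| ≤ c * M * min z a⁻¹ := by
  have hle : ∀ᵐ x, x ∈ Ioc 0 z → ‖c * exp (-a * (z - x)) * w x‖ ≤ c * M * exp (-a * (z - x)) :=
    ae_of_all _ fun x hx => by
      rw [Real.norm_eq_abs, abs_mul, abs_mul, abs_of_nonneg hc, abs_of_pos (exp_pos _)]
      linarith [mul_le_mul_of_nonneg_left (hw x hx) (mul_nonneg hc (exp_pos (-a * (z - x))).le)]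
  calc |∫ x in (0 : ℝ)..z, c * exp (-a * (z - x)) * w x|
      ≤ ∫ x in (0 : ℝ)..z, c * M * exp (-a * (z - x)) :=
        intervalIntegral.norm_integral_le_of_norm_le hz hle
          ((by fun_prop : Continuous _).intervalIntegrable _ _)
    _ ≤ c * M * min z a⁻¹ := by
        rw [intervalIntegral.integral_const_mul]
        exact mul_le_mul_of_nonneg_left (integral_exp_neg_mul_sub_le_min ha hz) (by positivity)

theorem mul_sq_integral_integral_mul_exp_neg_mul_sub_le {a c M s T : ℝ} {w : ℝ → ℝ} (ha : 0 ≤ a)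
    (hc : 0 ≤ c) (hM : 0 ≤ M) (hs : 0 ≤ s) (hsT : s ≤ T) (hw : ∀ x ∈ Ioc 0 s, |w x| ≤ M) :
    a * (∫ z in (0 : ℝ)..s, ∫ x in (0 : ℝ)..z, c * exp (-a * (z - x)) * w x) ^ 2 ≤
      c ^ 2 * M ^ 2 * T ^ 2 * min T a⁻¹ := by
  rcases ha.eq_or_lt with rfl | ha
  · have : 0 ≤ T := hs.trans hsT
    simp only [zero_mul, inv_zero]
    positivity
  set m := min T a⁻¹
  have hm : 0 ≤ m := le_min (hs.trans hsT) (inv_nonneg.mpr ha.le)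
  have ham : a * m ≤ 1 :=
    (mul_le_mul_of_nonneg_left (min_le_right _ _) ha.le).trans (mul_inv_cancel₀ ha.ne').le
  have hinner : ∀ z ∈ uIoc 0 s, ‖∫ x in (0 : ℝ)..z, c * exp (-a * (z - x)) * w x‖ ≤ c * M * m := by
    rw [uIoc_of_le hs]
    intro z hz
    calc _ ≤ c * M * min z a⁻¹ := abs_integral_mul_exp_neg_mul_sub_le ha hc hM hz.1.le
            fun x hx => hw x ⟨hx.1, hx.2.trans hz.2⟩
      _ ≤ c * M * m :=
          mul_le_mul_of_nonneg_left (min_le_min_right _ (hz.2.trans hsT)) (by positivity)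
  have houter := intervalIntegral.norm_integral_le_of_norm_le_const hinner
  rw [Real.norm_eq_abs, sub_zero, abs_of_nonneg hs] at houter
  have hΦ := abs_le.mp (houter.trans (mul_le_mul_of_nonneg_left hsT (by positivity)))
  calc a * (∫ z in (0 : ℝ)..s, ∫ x in (0 : ℝ)..z, c * exp (-a * (z - x)) * w x) ^ 2
      ≤ a * (c * M * m * T) ^ 2 := mul_le_mul_of_nonneg_left (sq_le_sq' hΦ.1 hΦ.2) ha.le
    _ = c ^ 2 * M ^ 2 * T ^ 2 * m * (a * m) := by ring
    _ ≤ c ^ 2 * M ^ 2 * T ^ 2 * m := mul_le_of_le_one_right (by positivity) ham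

theorem integrable_comp_abs_of_integrableOn_Ioi {f : ℝ → ℝ} (hf : IntegrableOn f (Ioi 0)) :
    Integrable fun x => f |x| := by
  have hIoi : IntegrableOn (fun x => f |x|) (Ioi 0) :=
    hf.congr_fun (fun x hx => by rw [abs_of_pos hx]) measurableSet_Ioi
  have hIic : IntegrableOn (fun x => f |x|) (Iic 0) := by
    have hneg : MeasurableEmbedding fun x : ℝ => -x := (Homeomorph.neg ℝ).measurableEmbedding
    rw [← Measure.map_neg_eq_self (volume : Measure ℝ), hneg.integrableOn_map_iff]
    simp_rw [Function.comp_def, abs_neg, neg_preimage, neg_Iic, neg_zero]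
    exact Iff.mpr integrableOn_Ici_iff_integrableOn_Ioi hIoi
  rw [← integrableOn_univ, ← Iic_union_Ioi (a := (0 : ℝ))]
  exact hIic.union hIoi

theorem integrableOn_Ioi_rpow_mul_min_inv {p T η : ℝ} (hp0 : -1 < p) (hp1 : p < 1) (hT : 0 ≤ T)
    (hη : 0 ≤ η) : IntegrableOn (fun y : ℝ => y ^ p * min T (y ^ 2 + η)⁻¹) (Ioi 0) := by
  have hmeas : AEStronglyMeasurable (fun y : ℝ => y ^ p * min T (y ^ 2 + η)⁻¹) :=
    (by fun_prop : Measurable _).aestronglyMeasurable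
  have hnorm : ∀ y, 0 < y → ‖y ^ p * min T (y ^ 2 + η)⁻¹‖ = y ^ p * min T (y ^ 2 + η)⁻¹ :=
    fun y hy => Real.norm_of_nonneg (mul_nonneg (rpow_nonneg hy.le _) (le_min hT (by positivity)))
  rw [← Ioc_union_Ioi_eq_Ioi zero_le_one]
  refine IntegrableOn.union ?_ ?_
  · have hpow : IntegrableOn (fun y : ℝ => y ^ p) (Ioc 0 1) := by
      simpa [intervalIntegrable_iff, uIoc_of_le zero_le_one] using
        intervalIntegral.intervalIntegrable_rpow' (a := 0) (b := 1) hp0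
    refine (hpow.const_mul T).mono' hmeas.restrict ?_
    filter_upwards [ae_restrict_mem measurableSet_Ioc] with y hy
    rw [hnorm y hy.1, mul_comm T]
    exact mul_le_mul_of_nonneg_left (min_le_left _ _) (rpow_nonneg hy.1.le _)
  · have hpow : IntegrableOn (fun y : ℝ => y ^ (p - 2)) (Ioi 1) :=
      integrableOn_Ioi_rpow_of_lt (by linarith) one_pos
    refine hpow.mono' hmeas.restrict ?_
    filter_upwards [ae_restrict_mem measurableSet_Ioi] with y (hy : 1 < y)
    have hy0 : 0 < y := one_pos.trans hy
    rw [hnorm y hy0, rpow_sub hy0, rpow_two, div_eq_mul_inv]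
    refine mul_le_mul_of_nonneg_left ((min_le_right _ _).trans ?_) (rpow_nonneg hy0.le _)
    exact inv_anti₀ (by positivity) (by linarith)

theorem integrable_abs_rpow_mul_min_inv {p T η : ℝ} (hp0 : -1 < p) (hp1 : p < 1) (hT : 0 ≤ T)
    (hη : 0 ≤ η) : Integrable fun x : ℝ => |x| ^ p * min T (x ^ 2 + η)⁻¹ := by
  simpa only [sq_abs] using
    integrable_comp_abs_of_integrableOn_Ioi (integrableOn_Ioi_rpow_mul_min_inv hp0 hp1 hT hη)

theorem stmt_10_general (α η T M : ℝ) (hα0 : 0 < α) (hα1 : α < 1) (hη : 0 ≤ η)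
    (hT : 0 < T) (hM : 0 ≤ M)
    (w : ℝ → ℝ)
    (hwM : ∀ s ∈ Set.Ico (0 : ℝ) T, |w s| ≤ M)
    (φ : ℝ → ℝ → ℝ) (H : ℝ → ℝ)
    (hφ : ∀ ξ t : ℝ, φ ξ t =
      ∫ s in (0 : ℝ)..t, |ξ| ^ ((2 * α - 1) / 2) * Real.exp (-(ξ ^ 2 + η) * (t - s)) * w s)
    (hH : ∀ t : ℝ, H t =
      ∫ s in (0 : ℝ)..t, ∫ ξ : ℝ, (ξ ^ 2 + η) * (∫ z in (0 : ℝ)..s, φ ξ z) ^ 2) :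
    ∃ C : ℝ, ∀ t : ℝ, 0 ≤ t → t < T → H t ≤ C := by
  set K := ∫ ξ : ℝ, M ^ 2 * T ^ 2 * (|ξ| ^ (2 * α - 1) * min T (ξ ^ 2 + η)⁻¹)
  have hinner : ∀ s, 0 ≤ s → s < T →
      ‖∫ ξ : ℝ, (ξ ^ 2 + η) * (∫ z in (0 : ℝ)..s, φ ξ z) ^ 2‖ ≤ K := by
    intro s hs hsT
    refine norm_integral_le_of_norm_le ((integrable_abs_rpow_mul_min_inv (by linarith)
      (by linarith) hT.le hη).const_mul _) (ae_of_all _ fun ξ => ?_)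
    have hμ : (|ξ| ^ ((2 * α - 1) / 2)) ^ 2 = |ξ| ^ (2 * α - 1) := by
      rw [← rpow_natCast, ← rpow_mul (abs_nonneg ξ)]
      norm_num
    rw [Real.norm_of_nonneg (by positivity)]
    simp only [hφ]
    calc _ ≤ (|ξ| ^ ((2 * α - 1) / 2)) ^ 2 * M ^ 2 * T ^ 2 * min T (ξ ^ 2 + η)⁻¹ :=
          mul_sq_integral_integral_mul_exp_neg_mul_sub_le (by positivity) (by positivity) hM hs
            hsT.le fun x hx => hwM x ⟨hx.1.le, hx.2.trans_lt hsT⟩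
      _ = _ := by rw [hμ]; ring
  have hK : 0 ≤ K := (norm_nonneg _).trans (hinner 0 le_rfl hT)
  refine ⟨K * T, fun t ht0 htT => ?_⟩
  have hH_le := intervalIntegral.norm_integral_le_of_norm_le_const fun s hs =>
    hinner s (uIoc_of_le ht0 ▸ hs).1.le ((uIoc_of_le ht0 ▸ hs).2.trans_lt htT)
  rw [← hH t, Real.norm_eq_abs, sub_zero, abs_of_nonneg ht0] at hH_le
  calc H t ≤ K * t := (le_abs_self _).trans hH_le
    _ ≤ K * T := mul_le_mul_of_nonneg_left htT.le hK

/-- Lemma 10 of the paper (pointwise-in-`x` version): with `μ(ξ) = |ξ|^{(2α-1)/2}`,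
a bounded continuous input `w` on `[0,T)` (`|w| ≤ M`) and
`φ(ξ,t) = ∫₀ᵗ μ(ξ) e^{-(ξ²+η)(t-s)} w(s) ds`, the quantity
`H(t) = ∫₀ᵗ ∫_ℝ (ξ²+η) (∫₀ˢ φ(ξ,z) dz)² dξ ds` is bounded:
there is a finite constant `C` with `H(t) ≤ C` for all `t ∈ [0,T)`. -/
theorem stmt_10 (α η T M : ℝ) (hα0 : 0 < α) (hα1 : α < 1) (hη : 0 ≤ η)
    (hT : 0 < T) (hM : 0 ≤ M)
    (w : ℝ → ℝ) (hw : ContinuousOn w (Set.Ico 0 T))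
    (hwM : ∀ s ∈ Set.Ico (0 : ℝ) T, |w s| ≤ M)
    (φ : ℝ → ℝ → ℝ) (H : ℝ → ℝ)
    (hφ : ∀ ξ t : ℝ, φ ξ t =
      ∫ s in (0 : ℝ)..t, |ξ| ^ ((2 * α - 1) / 2) * Real.exp (-(ξ ^ 2 + η) * (t - s)) * w s)
    (hH : ∀ t : ℝ, H t =
      ∫ s in (0 : ℝ)..t, ∫ ξ : ℝ, (ξ ^ 2 + η) * (∫ z in (0 : ℝ)..s, φ ξ z) ^ 2) :
    ∃ C : ℝ, ∀ t : ℝ, 0 ≤ t → t < T → H t ≤ C :=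
  stmt_10_general α η T M hα0 hα1 hη hT hM w hwM φ H hφ hH
end
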